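/- Let λ > 0, y = (ỹ, 0) with ỹ ∈ ℝ², and Φ ∈ ℂ² with ‖Φ‖² = 3λ/8. Define u = √(3/2)·U_{λ,y} and ψ(x) = U_{λ,y}(x)³·(Φ − c((x − y)/λ)Φ). Then on the closed half-space ℝ³₊ = {x ∈ ℝ³ : x₃ ≥ 0} the pair (u, ψ) satisfies: −Δu = ‖ψ‖²·u and Dψ = u²·ψ at every point of ℝ³₊, and in addition u satisfies the homogeneous Neumann boundary condition ∂u/∂x₃(x̃, 0) = 0 for every x̃ ∈ ℝ². (These are the interior equations and the scalar boundary condition of the boundary blow-up system (1.7) with b = 0, for the explicit boundary bubbles of Corollary 1.3.) -/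

import Mathlib

noncomputable section

/-- Points of Euclidean `ℝ³`. -/
abbrev R3 := EuclideanSpace ℝ (Fin 3)

/-- Points of Euclidean `ℝ²`. -/
abbrev R2 := EuclideanSpace ℝ (Fin 2)

/-- Spinors: `ℂ²` with its standard Hermitian inner product and norm. -/
abbrev Spinor := EuclideanSpace ℂ (Fin 2)

/-- Inclusion of the boundary hyperplane: `x̃ ∈ ℝ² ↦ (x̃, 0) ∈ ℝ³`. -/
def embed (p : R2) : R3 :=
  (WithLp.equiv 2 (Fin 3 → ℝ)).symm ![p 0, p 1, 0]

/-- The standard bubble `U_{λ,y}(x) = (2λ/(λ² + ‖x − y‖²))^(1/2)`. -/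
def bubble (l : ℝ) (y : R3) (x : R3) : ℝ :=
  Real.sqrt (2 * l / (l ^ 2 + ‖x - y‖ ^ 2))

/-- The Euclidean Laplacian `Δu = ∑_{j=1}^3 ∂²u/∂x_j²`. -/
def laplacian (u : R3 → ℝ) (x : R3) : ℝ :=
  ∑ j : Fin 3,
    fderiv ℝ (fun z => fderiv ℝ u z (EuclideanSpace.single j 1)) x (EuclideanSpace.single j 1)

/-- Pauli matrix `σ₁`. -/
def pauli1 : Matrix (Fin 2) (Fin 2) ℂ := !![0, 1; 1, 0]

/-- Pauli matrix `σ₂`. -/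
def pauli2 : Matrix (Fin 2) (Fin 2) ℂ := !![0, -Complex.I; Complex.I, 0]

/-- Pauli matrix `σ₃`. -/
def pauli3 : Matrix (Fin 2) (Fin 2) ℂ := !![1, 0; 0, -1]

/-- Clifford multiplication by `v ∈ ℝ³`: the matrix `c(v) = −i(v₁σ₁ + v₂σ₂ + v₃σ₃)`. -/
def cliffordMatrix (v : R3) : Matrix (Fin 2) (Fin 2) ℂ :=
  (-Complex.I) • ((v 0 : ℂ) • pauli1 + (v 1 : ℂ) • pauli2 + (v 2 : ℂ) • pauli3)

/-- The action of `c(v)` on a spinor. -/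
def cliffordMul (v : R3) (φ : Spinor) : Spinor :=
  (WithLp.equiv 2 (Fin 2 → ℂ)).symm ((cliffordMatrix v).mulVec (WithLp.equiv 2 (Fin 2 → ℂ) φ))

/-- The flat Dirac operator `(Dψ)(x) = ∑_{j=1}^3 c(e_j) ∂ψ/∂x_j(x)`. -/
def Dirac (ψ : R3 → Spinor) (x : R3) : Spinor :=
  ∑ j : Fin 3,
    cliffordMul (EuclideanSpace.single j 1) (fderiv ℝ ψ x (EuclideanSpace.single j 1))

/-- The ground-state scalar `u = √(3/2)·U_{λ,y}`. -/
def groundScalar (l : ℝ) (y : R3) (x : R3) : ℝ :=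
  Real.sqrt (3 / 2) * bubble l y x

/-- The ground-state spinor `ψ(x) = U_{λ,y}(x)³·(Φ − c((x − y)/λ)Φ)`. -/
def groundSpinor (l : ℝ) (y : R3) (Φ : Spinor) (x : R3) : Spinor :=
  (bubble l y x ^ 3 : ℝ) • (Φ - cliffordMul (l⁻¹ • (x - y)) Φ)

/-!
Write `R(x) = √(λ² + ‖x − y‖²)`, so that `u = √(3λ) R⁻¹` and
`ψ = (2λ)^{3/2} R⁻³ (Φ − λ⁻¹ c(x − y)Φ)`. For radial powers,
`∇R⁻ᵏ = −k R⁻ᵏ⁻² (x − y)` and `ΔR⁻ᵏ = −k (3R² − (k + 2)‖x − y‖²) R⁻ᵏ⁻⁴`, hence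
`−Δu = 3√(3λ) λ² R⁻⁵`. Since `c(v)` is skew-adjoint with `c(v)² = −‖v‖²`, one gets
`‖Φ − c(v)Φ‖² = (1 + ‖v‖²)‖Φ‖²` and `‖ψ‖² = 3λ² R⁻⁴`. For the Dirac equation, the Leibniz rule
`D(fχ) = f Dχ + c(∇f)χ` together with `∑ⱼ c(eⱼ)² = −3` and `‖x − y‖² = R² − λ²` gives
`Dψ = 3λ R⁻² ψ = u² ψ`. Finally `∂₃u` is proportional to `x₃ − y₃`, which vanishes on the
boundary because `y₃ = 0`.
-/

lemma cliffordMul_apply_zero (v : R3) (φ : Spinor) :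
    cliffordMul v φ 0 = -Complex.I * v 2 * φ 0 + (-Complex.I * v 0 - v 1) * φ 1 := by
  simp [cliffordMul, cliffordMatrix, pauli1, pauli2, pauli3, dotProduct, Fin.sum_univ_two]
  linear_combination (↑(v 1) * φ 1) * Complex.I_sq

lemma cliffordMul_apply_one (v : R3) (φ : Spinor) :
    cliffordMul v φ 1 = (-Complex.I * v 0 + v 1) * φ 0 + Complex.I * v 2 * φ 1 := by
  simp [cliffordMul, cliffordMatrix, pauli1, pauli2, pauli3, dotProduct, Fin.sum_univ_two]
  linear_combination (-(↑(v 1) : ℂ) * φ 0) * Complex.I_sq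

lemma spinor_ext {φ θ : Spinor} (h0 : φ 0 = θ 0) (h1 : φ 1 = θ 1) : φ = θ := by
  ext i; fin_cases i <;> assumption

lemma cliffordMul_add_left (v w : R3) (φ : Spinor) :
    cliffordMul (v + w) φ = cliffordMul v φ + cliffordMul w φ := by
  apply spinor_ext <;> simp [cliffordMul_apply_zero, cliffordMul_apply_one] <;> ring

lemma cliffordMul_smul_left (r : ℝ) (v : R3) (φ : Spinor) :
    cliffordMul (r • v) φ = r • cliffordMul v φ := by
  apply spinor_ext <;> simp [cliffordMul_apply_zero, cliffordMul_apply_one, Complex.real_smul] <;>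
    ring

lemma cliffordMul_add_right (v : R3) (φ θ : Spinor) :
    cliffordMul v (φ + θ) = cliffordMul v φ + cliffordMul v θ := by
  apply spinor_ext <;> simp [cliffordMul_apply_zero, cliffordMul_apply_one] <;> ring

lemma cliffordMul_sub_right (v : R3) (φ θ : Spinor) :
    cliffordMul v (φ - θ) = cliffordMul v φ - cliffordMul v θ := by
  apply spinor_ext <;> simp [cliffordMul_apply_zero, cliffordMul_apply_one] <;> ring

lemma cliffordMul_smul_right (v : R3) (r : ℝ) (φ : Spinor) :
    cliffordMul v (r • φ) = r • cliffordMul v φ := by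
  apply spinor_ext <;> simp [cliffordMul_apply_zero, cliffordMul_apply_one, Complex.real_smul] <;>
    ring

lemma cliffordMul_eq_sum (v : R3) (φ : Spinor) :
    cliffordMul v φ = ∑ j, v j • cliffordMul (EuclideanSpace.single j 1) φ := by
  apply spinor_ext <;>
    simp [Fin.sum_univ_three, cliffordMul_apply_zero, cliffordMul_apply_one, Complex.real_smul] <;>
    ring

lemma cliffordMul_cliffordMul_self (v : R3) (φ : Spinor) :
    cliffordMul v (cliffordMul v φ) = -‖v‖ ^ 2 • φ := by
  rw [EuclideanSpace.norm_sq_eq]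
  apply spinor_ext <;>
    simp [Fin.sum_univ_three, cliffordMul_apply_zero, cliffordMul_apply_one, Complex.real_smul] <;>
    ring_nf <;> simp only [Complex.I_sq] <;> ring

lemma sum_cliffordMul_single_sq (φ : Spinor) :
    ∑ j, cliffordMul (EuclideanSpace.single j 1) (cliffordMul (EuclideanSpace.single j 1) φ)
      = (-3 : ℝ) • φ := by
  simp only [cliffordMul_cliffordMul_self, PiLp.norm_single, norm_one, Fin.sum_univ_three]
  module

lemma norm_sub_cliffordMul_sq (v : R3) (φ : Spinor) :
    ‖φ - cliffordMul v φ‖ ^ 2 = (1 + ‖v‖ ^ 2) * ‖φ‖ ^ 2 := by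
  simp only [EuclideanSpace.norm_sq_eq, Fin.sum_univ_two, Fin.sum_univ_three, PiLp.sub_apply,
    cliffordMul_apply_zero, cliffordMul_apply_one, Complex.sq_norm, Complex.normSq_apply,
    Complex.sub_re, Complex.sub_im, Complex.add_re, Complex.add_im, Complex.mul_re,
    Complex.mul_im, Complex.neg_re, Complex.neg_im, Complex.I_re, Complex.I_im,
    Complex.ofReal_re, Complex.ofReal_im, Real.norm_eq_abs, sq_abs]
  ring

def cliffordMulCLM (φ : Spinor) : R3 →L[ℝ] Spinor :=
  LinearMap.toContinuousLinearMap
    { toFun := fun v => cliffordMul v φ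
      map_add' := fun v w => cliffordMul_add_left v w φ
      map_smul' := fun r v => cliffordMul_smul_left r v φ }

@[simp]
lemma cliffordMulCLM_apply (φ : Spinor) (v : R3) : cliffordMulCLM φ v = cliffordMul v φ := rfl

lemma HasGradientAt.fderiv_single {ι : Type*} [Fintype ι] [DecidableEq ι]
    {f : EuclideanSpace ℝ ι → ℝ} {g x : EuclideanSpace ℝ ι} (h : HasGradientAt f g x) (j : ι) :
    fderiv ℝ f x (EuclideanSpace.single j 1) = g j := by
  simp [h.hasFDerivAt.fderiv, EuclideanSpace.inner_single_right]

lemma HasGradientAt.const_mul {F : Type*} [NormedAddCommGroup F] [InnerProductSpace ℝ F]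
    [CompleteSpace F] {f : F → ℝ} {g x : F} (h : HasGradientAt f g x) (c : ℝ) :
    HasGradientAt (fun z => c * f z) (c • g) x := by
  rw [hasGradientAt_iff_hasFDerivAt, map_smul]
  exact h.hasFDerivAt.const_mul c

section Radial

variable {l : ℝ} {y : R3}

def bubbleRadius (l : ℝ) (y z : R3) : ℝ := √(l ^ 2 + ‖z - y‖ ^ 2)

lemma bubbleRadius_sq (z : R3) : bubbleRadius l y z ^ 2 = l ^ 2 + ‖z - y‖ ^ 2 :=
  Real.sq_sqrt (by positivity)

lemma bubbleRadius_pos (hl : l ≠ 0) (z : R3) : 0 < bubbleRadius l y z :=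
  Real.sqrt_pos.2 (by positivity)

lemma bubble_eq_sqrt_div (hl : 0 ≤ l) (z : R3) :
    bubble l y z = √(2 * l) / bubbleRadius l y z :=
  Real.sqrt_div (by positivity) _

lemma bubble_sq (hl : 0 ≤ l) (z : R3) : bubble l y z ^ 2 = 2 * l / bubbleRadius l y z ^ 2 := by
  rw [bubble, Real.sq_sqrt (by positivity), bubbleRadius_sq]

lemma hasGradientAt_inv_pow_bubbleRadius (hl : l ≠ 0) (k : ℕ) (x : R3) :
    HasGradientAt (fun z => (bubbleRadius l y z ^ k)⁻¹)
      ((-k / bubbleRadius l y x ^ (k + 2)) • (x - y)) x := by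
  have hR := bubbleRadius_pos (y := y) hl x
  have hρ : HasFDerivAt (fun z : R3 => l ^ 2 + ‖z - y‖ ^ 2) (2 • innerSL ℝ (x - y)) x := by
    simpa using (((hasFDerivAt_id x).sub_const y).norm_sq).const_add (l ^ 2)
  have hRderiv : HasFDerivAt (bubbleRadius l y)
      ((1 / (2 * bubbleRadius l y x)) • 2 • innerSL ℝ (x - y)) x :=
    hρ.sqrt (by positivity)
  have h := (hasDerivAt_inv (pow_pos hR k).ne').comp_hasFDerivAt x (hRderiv.pow k)
  rw [hasGradientAt_iff_hasFDerivAt]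
  refine h.congr_fderiv ?_
  ext v
  rcases k with _ | k
  · simp
  · simp only [add_tsub_cancel_right, nsmul_eq_mul, smul_apply, coe_innerSL_apply,
      map_smul, InnerProductSpace.toDual_apply_apply, smul_eq_mul]
    field_simp
    ring

lemma fderiv_inv_pow_bubbleRadius_single (hl : l ≠ 0) (k : ℕ) (x : R3) (j : Fin 3) :
    fderiv ℝ (fun z => (bubbleRadius l y z ^ k)⁻¹) x (EuclideanSpace.single j 1)
      = -k * (x j - y j) * (bubbleRadius l y x ^ (k + 2))⁻¹ := by
  rw [(hasGradientAt_inv_pow_bubbleRadius hl k x).fderiv_single]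
  simp only [PiLp.smul_apply, PiLp.sub_apply, smul_eq_mul]
  ring

lemma fderiv_fderiv_inv_pow_bubbleRadius_single (hl : l ≠ 0) (k : ℕ) (x : R3) (j : Fin 3) :
    fderiv ℝ (fun z => fderiv ℝ (fun z => (bubbleRadius l y z ^ k)⁻¹) z
        (EuclideanSpace.single j 1)) x (EuclideanSpace.single j 1)
      = -k * ((bubbleRadius l y x ^ (k + 2))⁻¹
          - (k + 2) * (x j - y j) ^ 2 / bubbleRadius l y x ^ (k + 4)) := by
  simp_rw [fderiv_inv_pow_bubbleRadius_single hl]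
  have hcoord : HasFDerivAt (fun z : R3 => z j - y j) (EuclideanSpace.proj (𝕜 := ℝ) j) x :=
    (EuclideanSpace.proj (𝕜 := ℝ) j).hasFDerivAt.sub_const (y j)
  have h := ((hcoord.const_mul (-k : ℝ)).fun_mul
    (hasGradientAt_inv_pow_bubbleRadius (y := y) hl (k + 2) x).hasFDerivAt)
  rw [h.fderiv]
  have hR := bubbleRadius_pos (y := y) hl x
  simp only [add_apply, smul_apply, map_smul, InnerProductSpace.toDual_apply_apply,
    EuclideanSpace.inner_single_right, conj_trivial, PiLp.proj_apply, PiLp.single_eq_same,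
    PiLp.sub_apply, smul_eq_mul, Nat.cast_add, Nat.cast_ofNat]
  field_simp
  ring

lemma laplacian_inv_pow_bubbleRadius (hl : l ≠ 0) (k : ℕ) (x : R3) :
    laplacian (fun z => (bubbleRadius l y z ^ k)⁻¹) x
      = -k * (3 * bubbleRadius l y x ^ 2 - (k + 2) * ‖x - y‖ ^ 2)
          / bubbleRadius l y x ^ (k + 4) := by
  have hR := bubbleRadius_pos (y := y) hl x
  simp only [laplacian, fderiv_fderiv_inv_pow_bubbleRadius_single hl, Fin.sum_univ_three,
    EuclideanSpace.norm_sq_eq, PiLp.sub_apply, Real.norm_eq_abs, sq_abs]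
  field_simp
  ring

lemma laplacian_const_mul (c : ℝ) (u : R3 → ℝ) (x : R3) :
    laplacian (fun z => c * u z) x = c * laplacian u x := by
  have h : ∀ v : R3 → ℝ, fderiv ℝ (fun z => c * v z) = c • fderiv ℝ v :=
    fun v => fderiv_const_smul_field (f := v) c
  simp only [laplacian, h, Pi.smul_apply, smul_apply, smul_eq_mul, Finset.mul_sum]

end Radial

lemma dirac_smul {f : R3 → ℝ} {g x : R3} {φ : R3 → Spinor} (hf : HasGradientAt f g x)
    (hφ : DifferentiableAt ℝ φ x) :
    Dirac (fun z => f z • φ z) x = f x • Dirac φ x + cliffordMul g (φ x) := by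
  simp only [Dirac, fderiv_fun_smul hf.hasFDerivAt.differentiableAt hφ, add_apply, smul_apply,
    ContinuousLinearMap.smulRight_apply, hf.fderiv_single, cliffordMul_add_right,
    cliffordMul_smul_right, Finset.sum_add_distrib, ← Finset.smul_sum, cliffordMul_eq_sum g]

lemma hasFDerivAt_sub_cliffordMul (a : ℝ) (y : R3) (Φ : Spinor) (x : R3) :
    HasFDerivAt (fun z => Φ - cliffordMul (a • (z - y)) Φ) (-(a • cliffordMulCLM Φ)) x := by
  simpa [cliffordMul_smul_left] using (((cliffordMulCLM Φ).hasFDerivAt.comp x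
    (((hasFDerivAt_id x).sub_const y).const_smul a))).const_sub Φ

lemma dirac_sub_cliffordMul (a : ℝ) (y : R3) (Φ : Spinor) (x : R3) :
    Dirac (fun z => Φ - cliffordMul (a • (z - y)) Φ) x = (3 * a) • Φ := by
  simp only [Dirac, (hasFDerivAt_sub_cliffordMul a y Φ x).fderiv, neg_apply, ← neg_smul,
    smul_apply, cliffordMulCLM_apply, cliffordMul_smul_right, ← Finset.smul_sum, sum_cliffordMul_single_sq, smul_smul]
  congr 1
  ring

section GroundState

variable {l : ℝ} {y : R3}

lemma groundScalar_eq (hl : 0 ≤ l) :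
    groundScalar l y = fun z => √(3 * l) * (bubbleRadius l y z ^ 1)⁻¹ := by
  funext z
  rw [groundScalar, bubble_eq_sqrt_div hl, pow_one, ← mul_div_assoc,
    ← Real.sqrt_mul (by norm_num), div_eq_mul_inv]
  ring_nf

lemma groundScalar_sq (hl : 0 ≤ l) (z : R3) :
    groundScalar l y z ^ 2 = 3 * l / bubbleRadius l y z ^ 2 := by
  rw [groundScalar_eq hl, mul_pow, Real.sq_sqrt (by positivity)]
  ring

lemma fderiv_groundScalar_single (hl : 0 < l) (x : R3) (j : Fin 3) :
    fderiv ℝ (groundScalar l y) x (EuclideanSpace.single j 1)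
      = -√(3 * l) * (x j - y j) / bubbleRadius l y x ^ 3 := by
  rw [groundScalar_eq hl.le,
    ((hasGradientAt_inv_pow_bubbleRadius hl.ne' 1 x).const_mul √(3 * l)).fderiv_single]
  simp only [PiLp.smul_apply, PiLp.sub_apply, smul_eq_mul]
  ring

lemma laplacian_groundScalar (hl : 0 < l) (x : R3) :
    laplacian (groundScalar l y) x = -3 * √(3 * l) * l ^ 2 / bubbleRadius l y x ^ 5 := by
  rw [groundScalar_eq hl.le, laplacian_const_mul, laplacian_inv_pow_bubbleRadius hl.ne',
    bubbleRadius_sq]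
  have hR := bubbleRadius_pos (y := y) hl.ne' x
  field_simp
  ring

lemma norm_groundSpinor_sq {Φ : Spinor} (hl : 0 < l) (hΦ : ‖Φ‖ ^ 2 = 3 * l / 8) (x : R3) :
    ‖groundSpinor l y Φ x‖ ^ 2 = 3 * l ^ 2 / bubbleRadius l y x ^ 4 := by
  have hR := bubbleRadius_pos (y := y) hl.ne' x
  have hxy : ‖x - y‖ ^ 2 = bubbleRadius l y x ^ 2 - l ^ 2 := by rw [bubbleRadius_sq]; ring
  rw [groundSpinor, norm_smul, mul_pow, norm_sub_cliffordMul_sq, norm_smul, mul_pow, hΦ, hxy,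
    Real.norm_eq_abs, Real.norm_eq_abs, sq_abs, sq_abs, ← pow_mul, pow_mul', bubble_sq hl.le]
  field_simp
  ring

lemma groundSpinor_eq (Φ : Spinor) (hl : 0 ≤ l) :
    groundSpinor l y Φ = fun z => (√(2 * l) ^ 3 * (bubbleRadius l y z ^ 3)⁻¹) •
      (Φ - cliffordMul (l⁻¹ • (z - y)) Φ) := by
  funext z
  rw [groundSpinor, bubble_eq_sqrt_div hl, div_pow, div_eq_mul_inv]

lemma dirac_groundSpinor (Φ : Spinor) (hl : 0 < l) (x : R3) :
    Dirac (groundSpinor l y Φ) x = (groundScalar l y x ^ 2) • groundSpinor l y Φ x := by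
  have hR := bubbleRadius_pos (y := y) hl.ne' x
  have hxy : ‖x - y‖ ^ 2 = bubbleRadius l y x ^ 2 - l ^ 2 := by rw [bubbleRadius_sq]; ring
  rw [groundScalar_sq hl.le, groundSpinor_eq Φ hl.le,
    dirac_smul ((hasGradientAt_inv_pow_bubbleRadius hl.ne' 3 x).const_mul _)
      (hasFDerivAt_sub_cliffordMul _ y Φ x).differentiableAt,
    dirac_sub_cliffordMul]
  simp only [cliffordMul_sub_right, cliffordMul_smul_left, cliffordMul_smul_right,
    cliffordMul_cliffordMul_self, hxy]
  match_scalars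
  · field_simp
    ring
  · field_simp

end GroundState

/-- Let `λ > 0`, `y = (ỹ, 0)` with `ỹ ∈ ℝ²`, and `Φ ∈ ℂ²` with `‖Φ‖² = 3λ/8`. On the closed
half-space `{x₃ ≥ 0}` the pair `u = √(3/2)·U_{λ,y}`, `ψ(x) = U_{λ,y}(x)³·(Φ − c((x − y)/λ)Φ)`
satisfies `−Δu = ‖ψ‖²·u` and `Dψ = u²·ψ`, and `u` satisfies the homogeneous Neumann boundary
condition `∂u/∂x₃(x̃, 0) = 0` for all `x̃ ∈ ℝ²`. -/
theorem groundstate_halfspace (l : ℝ) (hl : 0 < l) (ty : R2) (Φ : Spinor)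
    (hΦ : ‖Φ‖ ^ 2 = 3 * l / 8) :
    (∀ x : R3, 0 ≤ x 2 →
        -laplacian (groundScalar l (embed ty)) x
          = ‖groundSpinor l (embed ty) Φ x‖ ^ 2 * groundScalar l (embed ty) x) ∧
      (∀ x : R3, 0 ≤ x 2 →
        Dirac (groundSpinor l (embed ty) Φ) x
          = (groundScalar l (embed ty) x ^ 2 : ℝ) • groundSpinor l (embed ty) Φ x) ∧
      (∀ p : R2,
        fderiv ℝ (groundScalar l (embed ty)) (embed p) (EuclideanSpace.single 2 1) = 0) := by
  refine ⟨fun x _ => ?_, fun x _ => dirac_groundSpinor Φ hl x, fun p => ?_⟩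
  · have hR := bubbleRadius_pos (y := embed ty) hl.ne' x
    rw [laplacian_groundScalar hl, norm_groundSpinor_sq hl hΦ, groundScalar_eq hl.le]
    field_simp
  · rw [fderiv_groundScalar_single hl]
    simp [embed]
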